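/- arXiv:2004.02515 — 2 statements merged into one kernel-verified Lean document; each statement's English description precedes it below -/
import Mathlib

section
/- For every integer m ≥ 0, the element tr Fᵐ = ∑_{i₁,…,i_m=1}^N F_{i₁i₂}F_{i₂i₃}⋯F_{i_m i₁} belongs to the center of the universal enveloping algebra U(𝔤). (Corollary 2.2.) -/
/-! The matrix `F` is `𝔤`-invariant: for `x ∈ 𝔤`, the commutator `[ι x, F]` (taken entrywise)
equals `[F, ρ x]`. Entrywise this is the ad-invariance of the Casimir tensor `∑ₐ Jᵃ ⊗ J_a`,
which follows from the invariance of `B`. So `F`, and hence every power `Fᵐ`, commutes with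
`ι x · 1 + ρ x`. Taking traces, the contribution of `ρ x` cancels because its entries are central,
so `ι x` commutes with `tr Fᵐ`; as `ι(𝔤)` generates `U(𝔤)`, `tr Fᵐ` is central. -/

/- Context: 𝔤 a finite-dimensional simple Lie algebra over ℂ, B a nondegenerate symmetric
invariant bilinear form, dual bases Jup = (Jᵃ), Jlo = (J_a), ρ a faithful representation
on ℂᴺ, f_{ij} = −∑ₐ (ρ(Jᵃ))_{ij}·J_a, F_{ij} = ι(f_{ij}) ∈ U(𝔤). -/

attribute [local instance 100] LieRing.ofAssociativeRing

/-- The element `f_{ij} = −∑ₐ (ρ(Jᵃ))_{ij}·J_a ∈ 𝔤`. -/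
noncomputable def fElem {d N : ℕ} {g : Type} [LieRing g] [LieAlgebra ℂ g]
    (ρ : g →ₗ⁅ℂ⁆ Matrix (Fin N) (Fin N) ℂ)
    (Jup Jlo : Module.Basis (Fin d) ℂ g) (i j : Fin N) : g :=
  -(∑ a : Fin d, (ρ (Jup a)) i j • Jlo a)

/-- The matrix `F` over `U(𝔤)` with entries `F_{ij} = ι(f_{ij})`. -/
noncomputable def FMat {d N : ℕ} {g : Type} [LieRing g] [LieAlgebra ℂ g]
    (ρ : g →ₗ⁅ℂ⁆ Matrix (Fin N) (Fin N) ℂ)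
    (Jup Jlo : Module.Basis (Fin d) ℂ g) :
    Matrix (Fin N) (Fin N) (UniversalEnvelopingAlgebra ℂ g) :=
  Matrix.of fun i j => UniversalEnvelopingAlgebra.ι ℂ (fElem ρ Jup Jlo i j)

namespace UniversalEnvelopingAlgebra

variable {R L : Type*} [CommRing R] [LieRing L] [LieAlgebra R L]

theorem adjoin_range_ι :
    Algebra.adjoin R (Set.range (ι R : L → UniversalEnvelopingAlgebra R L)) = ⊤ :=
  calc Algebra.adjoin R (Set.range (ι R : L → UniversalEnvelopingAlgebra R L))
      = (Algebra.adjoin R (Set.range (TensorAlgebra.ι R))).map (mkAlgHom R L) := by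
        rw [AlgHom.map_adjoin, ← Set.range_comp]; rfl
    _ = ⊤ := by
        rw [TensorAlgebra.adjoin_range_ι, Algebra.map_top, AlgHom.range_eq_top]
        exact RingCon.mkₐ_surjective _

theorem mem_center_of_forall_commute_ι {u : UniversalEnvelopingAlgebra R L}
    (h : ∀ x, Commute (ι R x) u) : u ∈ Subalgebra.center R (UniversalEnvelopingAlgebra R L) := by
  rw [Subalgebra.mem_center_iff]
  intro b
  have hu : u ∈ Subalgebra.centralizer R (Set.range (ι R : L → _)) := by
    rintro _ ⟨x, rfl⟩
    exact (h x).eq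
  have hb : b ∈ Subalgebra.centralizer R (Subalgebra.centralizer R (Set.range (ι R : L → _))) :=
    Algebra.adjoin_le_centralizer_centralizer R _
      (adjoin_range_ι (R := R) (L := L) ▸ Algebra.mem_top)
  exact (hb u hu).symm

end UniversalEnvelopingAlgebra

namespace Matrix

variable {n m α : Type*} [Fintype n] [Fintype m]

theorem trace_mul_comm_of_commute [AddCommMonoid α] [Mul α] (A : Matrix m n α) (B : Matrix n m α)
    (h : ∀ i j, Commute (A i j) (B j i)) : trace (A * B) = trace (B * A) := by
  simp only [trace, diag, mul_apply]
  rw [Finset.sum_comm]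
  exact Finset.sum_congr rfl fun i _ => Finset.sum_congr rfl fun j _ => (h j i).eq

theorem commute_trace_of_commute_scalar_add_map [DecidableEq n] {R A : Type*} [CommSemiring R]
    [Ring A] [Algebra R A] {u : A} {Y : Matrix n n R} {M : Matrix n n A}
    (h : Commute (scalar n u + Y.map (algebraMap R A)) M) : Commute u M.trace := by
  have htr := congrArg trace h.eq
  rw [add_mul, mul_add, trace_add, trace_add,
    trace_mul_comm_of_commute (Y.map (algebraMap R A)) M
      fun i j => Algebra.commutes (Y i j) (M j i),
    scalar_apply, ← smul_eq_diagonal_mul, ← op_smul_eq_mul_diagonal, trace_smul, trace_smul] at htr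
  exact add_right_cancel htr

end Matrix

namespace Module.Basis

variable {ι R M : Type*} [DecidableEq ι] [CommRing R] [AddCommGroup M] [Module R M]
  {B : M →ₗ[R] M →ₗ[R] R} {Jup Jlo : Basis ι R M}

theorem repr_apply_eq_of_dual_left (hdual : ∀ a b, B (Jlo a) (Jup b) = if a = b then 1 else 0)
    (y : M) (a : ι) : Jup.repr y a = B (Jlo a) y := by
  have : Jup.coord a = B (Jlo a) := Jup.ext fun b => by
    simp [hdual, Finsupp.single_apply, eq_comm]
  exact LinearMap.congr_fun this y

theorem repr_apply_eq_of_dual_right (hdual : ∀ a b, B (Jlo a) (Jup b) = if a = b then 1 else 0)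
    (y : M) (a : ι) : Jlo.repr y a = B y (Jup a) := by
  have : Jlo.coord a = B.flip (Jup a) := Jlo.ext fun b => by
    simp [hdual, Finsupp.single_apply]
  exact LinearMap.congr_fun this y

end Module.Basis

/- The ad-invariance of the Casimir tensor `∑ₐ Jᵃ ⊗ J_a`, with `φ` applied to the first factor. -/
theorem sum_apply_smul_lie_eq_neg {ι R L : Type*} [Fintype ι] [DecidableEq ι] [CommRing R]
    [LieRing L] [LieAlgebra R L] {B : L →ₗ[R] L →ₗ[R] R} {Jup Jlo : Module.Basis ι R L}
    (hBinv : ∀ x y z, B ⁅x, y⁆ z = B x ⁅y, z⁆)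
    (hdual : ∀ a b, B (Jlo a) (Jup b) = if a = b then 1 else 0) (φ : Module.Dual R L) (x : L) :
    ∑ a, φ (Jup a) • ⁅x, Jlo a⁆ = -∑ a, φ ⁅x, Jup a⁆ • Jlo a := by
  have hskew : ∀ y z, B ⁅x, y⁆ z = -B y ⁅x, z⁆ := fun y z => by
    rw [← lie_skew, map_neg, LinearMap.neg_apply, hBinv]
  have hφ : ∀ b, φ ⁅x, Jup b⁆ = ∑ a, B (Jlo a) ⁅x, Jup b⁆ * φ (Jup a) := fun b => by
    conv_lhs => rw [← Jup.sum_repr ⁅x, Jup b⁆]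
    simp [Module.Basis.repr_apply_eq_of_dual_left hdual]
  refine Jlo.ext_elem fun b => ?_
  simp [Module.Basis.repr_apply_eq_of_dual_right hdual, hskew, Finsupp.single_apply, hφ, mul_comm]

section Invariance

variable {d N : ℕ} {g : Type} [LieRing g] [LieAlgebra ℂ g] {B : g →ₗ[ℂ] g →ₗ[ℂ] ℂ}
  {Jup Jlo : Module.Basis (Fin d) ℂ g}

theorem lie_fElem (hBinv : ∀ x y z, B ⁅x, y⁆ z = B x ⁅y, z⁆)
    (hdual : ∀ a b, B (Jlo a) (Jup b) = if a = b then 1 else 0)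
    (ρ : g →ₗ⁅ℂ⁆ Matrix (Fin N) (Fin N) ℂ) (x : g) (i j : Fin N) :
    ⁅x, fElem ρ Jup Jlo i j⁆
      = ∑ k, ρ x k j • fElem ρ Jup Jlo i k - ∑ k, ρ x i k • fElem ρ Jup Jlo k j := by
  have hinv := sum_apply_smul_lie_eq_neg hBinv hdual
    ((Matrix.entryLinearMap ℂ ℂ i j).comp ρ.toLinearMap) x
  simp only [LinearMap.comp_apply, Matrix.entryLinearMap_apply, LieHom.coe_toLinearMap,
    LieHom.map_lie, Ring.lie_def] at hinv
  calc ⁅x, fElem ρ Jup Jlo i j⁆ = -∑ a, ρ (Jup a) i j • ⁅x, Jlo a⁆ := by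
        simp only [fElem, lie_neg, lie_sum, lie_smul]
    _ = ∑ a, (ρ x * ρ (Jup a) - ρ (Jup a) * ρ x) i j • Jlo a := by rw [hinv, neg_neg]
    _ = _ := by
        simp only [fElem, Matrix.sub_apply, Matrix.mul_apply, sub_smul, Finset.sum_smul,
          Finset.smul_sum, smul_neg, smul_smul, Finset.sum_sub_distrib, Finset.sum_neg_distrib]
        rw [sub_neg_eq_add, sub_eq_neg_add, Finset.sum_comm (γ := Fin N),
          Finset.sum_comm (γ := Fin N)]
        simp only [mul_comm]

open UniversalEnvelopingAlgebra in
theorem commute_scalar_add_map_FMat (hBinv : ∀ x y z, B ⁅x, y⁆ z = B x ⁅y, z⁆)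
    (hdual : ∀ a b, B (Jlo a) (Jup b) = if a = b then 1 else 0)
    (ρ : g →ₗ⁅ℂ⁆ Matrix (Fin N) (Fin N) ℂ) (x : g) :
    Commute (Matrix.scalar (Fin N) (ι ℂ x)
        + (ρ x).map (algebraMap ℂ (UniversalEnvelopingAlgebra ℂ g))) (FMat ρ Jup Jlo) := by
  set F := FMat ρ Jup Jlo
  have hlie : ∀ i j, ι ℂ x * F i j - F i j * ι ℂ x
      = ∑ k, ρ x k j • F i k - ∑ k, ρ x i k • F k j := fun i j => by
    rw [← Ring.lie_def, show F i j = ι ℂ (fElem ρ Jup Jlo i j) from rfl, ← LieHom.map_lie,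
      lie_fElem hBinv hdual, map_sub, map_sum, map_sum]
    simp only [map_smul]
    rfl
  show _ * _ = _ * _
  ext i j
  rw [Matrix.scalar_apply, add_mul, mul_add, ← Matrix.smul_eq_diagonal_mul,
    ← Matrix.op_smul_eq_mul_diagonal]
  simp only [Matrix.add_apply, Matrix.smul_apply, Matrix.mul_apply, Matrix.map_apply, smul_eq_mul,
    MulOpposite.smul_eq_mul_unop, MulOpposite.unop_op, ← Algebra.commutes, ← Algebra.smul_def]
  rw [add_comm (F i j * _), ← sub_eq_sub_iff_add_eq_add, hlie]

end Invariance

theorem trace_power_central_general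
    {d N : ℕ} {g : Type} [LieRing g] [LieAlgebra ℂ g]
    (B : g →ₗ[ℂ] g →ₗ[ℂ] ℂ)
    (hBinv : ∀ x y z, B ⁅x, y⁆ z = B x ⁅y, z⁆)
    (Jup Jlo : Module.Basis (Fin d) ℂ g)
    (hdual : ∀ a b, B (Jlo a) (Jup b) = if a = b then 1 else 0)
    (ρ : g →ₗ⁅ℂ⁆ Matrix (Fin N) (Fin N) ℂ)
    (m : ℕ) :
    ((FMat ρ Jup Jlo) ^ m).trace ∈
      Subalgebra.center ℂ (UniversalEnvelopingAlgebra ℂ g) :=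
  UniversalEnvelopingAlgebra.mem_center_of_forall_commute_ι fun x =>
    Matrix.commute_trace_of_commute_scalar_add_map
      ((commute_scalar_add_map_FMat hBinv hdual ρ x).pow_right m)

/-- for every `m ≥ 0`, the element `tr Fᵐ` is central in `U(𝔤)`. -/
theorem trace_power_central
    {d N : ℕ} {g : Type} [LieRing g] [LieAlgebra ℂ g]
    [FiniteDimensional ℂ g] [LieAlgebra.IsSimple ℂ g]
    (B : g →ₗ[ℂ] g →ₗ[ℂ] ℂ)
    (hBsymm : ∀ x y, B x y = B y x)
    (hBinv : ∀ x y z, B ⁅x, y⁆ z = B x ⁅y, z⁆)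
    (hBnondeg : ∀ x, (∀ y, B x y = 0) → x = 0)
    (Jup Jlo : Module.Basis (Fin d) ℂ g)
    (hdual : ∀ a b, B (Jlo a) (Jup b) = if a = b then 1 else 0)
    (ρ : g →ₗ⁅ℂ⁆ Matrix (Fin N) (Fin N) ℂ)
    (hρ : Function.Injective ρ)
    (m : ℕ) :
    ((FMat ρ Jup Jlo) ^ m).trace ∈
      Subalgebra.center ℂ (UniversalEnvelopingAlgebra ℂ g) :=
  trace_power_central_general B hBinv Jup Jlo hdual ρ m
end

section
/- For all 1 ≤ i,j ≤ N and all m ≥ 1, the commutator [ι(F^{(0)}_{ij} ⊗ t⁰), tr 𝓕(u)ᵐ] is zero in U(L)[u], where L = 𝔤_ℓ ⊗_ℂ ℂ[t,t⁻¹] is the loop algebra of the Takiff algebra; that is, tr 𝓕(u)ᵐ commutes with the degree-(0,0) copy of 𝔤 in U(L). (Intermediate claim in the proof of Proposition 4.1, formulated in the loop algebra where no central term arises.) -/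
/- Context: 𝔤 simple finite-dimensional over ℂ, dual bases Jup, Jlo w.r.t. a nondegenerate
symmetric invariant form B, ρ faithful on ℂᴺ, f_{ij} = −∑ₐ (ρ(Jᵃ))_{ij}·J_a;
𝔤_ℓ = 𝔤 ⊗ ℂ[v]/(v^{ℓ+1}); L = 𝔤_ℓ ⊗ ℂ[t,t⁻¹] the loop algebra (modeled as
ℂ[t,t⁻¹] ⊗ 𝔤_ℓ), X[p] = X ⊗ tᵖ; 𝓕(u) the N×N matrix over U(L)[u] with entries
∑_{r=0}^ℓ ι(F^{(r)}_{ij}[−1])·uʳ. -/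

open TensorProduct

attribute [local instance 100] LieRing.ofAssociativeRing

/-- The truncated polynomial ring `ℂ[v]/(v^{ℓ+1})`. -/
abbrev TruncPoly (ℓ : ℕ) : Type :=
  Polynomial ℂ ⧸ Ideal.span {(Polynomial.X : Polynomial ℂ) ^ (ℓ + 1)}

/-- The image of `vʳ` in `ℂ[v]/(v^{ℓ+1})`. -/
noncomputable def vpow (ℓ r : ℕ) : TruncPoly ℓ :=
  Ideal.Quotient.mk _ (Polynomial.X ^ r)

/-- A base-changed Lie algebra is also a Lie algebra over the base field. -/
noncomputable instance instLieAlgebraCBaseChange {g : Type} [LieRing g] [LieAlgebra ℂ g]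
    {A : Type} [CommRing A] [Algebra ℂ A] : LieAlgebra ℂ (A ⊗[ℂ] g) where
  lie_smul t x y := by
    rw [← algebraMap_smul A t y, ← algebraMap_smul A t ⁅x, y⁆]
    exact (LieAlgebra.ExtendScalars.instLieAlgebra ℂ A g).lie_smul _ x y

/-- The loop algebra `L = ℂ[t,t⁻¹] ⊗ 𝔤_ℓ` of the Takiff algebra `𝔤_ℓ`. -/
abbrev LoopTakiff (ℓ : ℕ) (g : Type) [LieRing g] [LieAlgebra ℂ g] : Type :=
  LaurentPolynomial ℂ ⊗[ℂ] (TruncPoly ℓ ⊗[ℂ] g)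

noncomputable instance instLieRingLoopTakiff (ℓ : ℕ) {g : Type} [LieRing g]
    [LieAlgebra ℂ g] : LieRing (LoopTakiff ℓ g) :=
  LieAlgebra.ExtendScalars.instLieRing ℂ (LaurentPolynomial ℂ) (TruncPoly ℓ ⊗[ℂ] g)

noncomputable instance instLieAlgebraLoopTakiff (ℓ : ℕ) {g : Type} [LieRing g]
    [LieAlgebra ℂ g] : LieAlgebra ℂ (LoopTakiff ℓ g) :=
  instLieAlgebraCBaseChange (g := TruncPoly ℓ ⊗[ℂ] g) (A := LaurentPolynomial ℂ)

/-- The element `F^{(r)}_{ij}[p] = (f_{ij} ⊗ vʳ) ⊗ tᵖ` of the loop algebra. -/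
noncomputable def loopF {d N : ℕ} {g : Type} [LieRing g] [LieAlgebra ℂ g]
    (ρ : g →ₗ⁅ℂ⁆ Matrix (Fin N) (Fin N) ℂ) (Jup Jlo : Module.Basis (Fin d) ℂ g)
    (ℓ r : ℕ) (p : ℤ) (i j : Fin N) : LoopTakiff ℓ g :=
  LaurentPolynomial.T p ⊗ₜ (vpow ℓ r ⊗ₜ fElem ρ Jup Jlo i j)

/-- The matrix `𝓕(u)` over `U(L)[u]` with entries `∑_{r=0}^ℓ ι(F^{(r)}_{ij}[−1])·uʳ`. -/
noncomputable def loopFMat {d N : ℕ} {g : Type} [LieRing g] [LieAlgebra ℂ g]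
    (ρ : g →ₗ⁅ℂ⁆ Matrix (Fin N) (Fin N) ℂ) (Jup Jlo : Module.Basis (Fin d) ℂ g) (ℓ : ℕ) :
    Matrix (Fin N) (Fin N)
      (Polynomial (UniversalEnvelopingAlgebra ℂ (LoopTakiff ℓ g))) :=
  Matrix.of fun i j => ∑ r : Fin (ℓ + 1),
    Polynomial.C (UniversalEnvelopingAlgebra.ι ℂ (loopF ρ Jup Jlo ℓ (r : ℕ) (-1) i j)) *
      Polynomial.X ^ (r : ℕ)

/-! The form `B` identifies `f_{kl}` with the functional `-ρ(·)_{kl}`, so invariance of `B` gives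
`[x, f_{kl}] = (f ρ(x) - ρ(x) f)_{kl}` in `𝔤`. As `F^{(0)}_{ij}[0] = f_{ij} ⊗ 1 ⊗ 1`, this identity
passes unchanged to every coefficient of `𝓕(u)`: with `A = ρ(f_{ij})`, the matrix
`ι(F^{(0)}_{ij}[0]) · 1 + A` commutes with `𝓕(u)`, hence with `𝓕(u)ᵐ`. Taking traces, and using
that the scalar entries of `A` give `tr(A 𝓕(u)ᵐ) = tr(𝓕(u)ᵐ A)`, leaves the claim. -/

/-- `ad x` acts on the entries of `F` as the matrix commutator `F M - M F`. -/
def AdActsAsCommutator {n R L : Type*} [Fintype n] [CommRing R] [LieRing L] [Module R L]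
    (x : L) (F : Matrix n n L) (M : Matrix n n R) : Prop :=
  ∀ k l, ⁅x, F k l⁆ = ∑ s, M s l • F k s - ∑ s, M k s • F s l

theorem Matrix.trace_map_algebraMap_mul_comm {n R S : Type*} [Fintype n] [CommSemiring R]
    [Semiring S] [Algebra R S] (M : Matrix n n R) (P : Matrix n n S) :
    (M.map (algebraMap R S) * P).trace = (P * M.map (algebraMap R S)).trace := by
  simp only [Matrix.trace, Matrix.diag_apply, Matrix.mul_apply, Matrix.map_apply,
    Algebra.commutes]
  exact Finset.sum_comm

namespace AdActsAsCommutator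

variable {n R L L' : Type*} [Fintype n] [CommRing R] [LieRing L] [Module R L] [LieRing L']
  [Module R L'] {x : L} {M : Matrix n n R}

theorem map {F : Matrix n n L} (h : AdActsAsCommutator x F M) (Ψ : L →ₗ[R] L') {x' : L'}
    (hΨ : ∀ z, ⁅x', Ψ z⁆ = Ψ ⁅x, z⁆) : AdActsAsCommutator x' (F.map Ψ) M := by
  intro k l
  simp [hΨ, h k l]

theorem sum {ι : Type*} [Fintype ι] {F : ι → Matrix n n L}
    (h : ∀ r, AdActsAsCommutator x (F r) M) : AdActsAsCommutator x (∑ r, F r) M := by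
  intro k l
  simp only [Matrix.sum_apply, lie_sum, h _ k l, Finset.sum_sub_distrib, Finset.smul_sum]
  rw [Finset.sum_comm (γ := n), Finset.sum_comm (γ := n)]

end AdActsAsCommutator

theorem AdActsAsCommutator.commute_trace_pow {n R S : Type*} [Fintype n] [DecidableEq n]
    [CommRing R] [Ring S] [Algebra R S] {x : S} {F : Matrix n n S} {M : Matrix n n R}
    (h : AdActsAsCommutator x F M) (m : ℕ) : Commute x (F ^ m).trace := by
  have hcomm : Commute (Matrix.diagonal (fun _ => x) + M.map (algebraMap R S)) F := by
    refine (Matrix.ext fun k l => ?_ : _ = _)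
    have hkl := h k l
    simp only [Ring.lie_def, Algebra.smul_def] at hkl
    rw [Matrix.add_mul, Matrix.mul_add, Matrix.add_apply, Matrix.add_apply, Matrix.diagonal_mul,
      Matrix.mul_diagonal, add_comm (F k l * x)]
    simpa [Matrix.mul_apply, Algebra.commutes] using sub_eq_sub_iff_add_eq_add.mp hkl
  have htr := congrArg Matrix.trace (hcomm.pow_right m).eq
  simp only [Matrix.add_mul, Matrix.mul_add, Matrix.trace_add,
    Matrix.trace_map_algebraMap_mul_comm, add_left_inj] at htr
  simpa [Commute, SemiconjBy, Matrix.trace, Matrix.diagonal_mul, Matrix.mul_diagonal,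
    Finset.mul_sum, Finset.sum_mul] using htr

theorem Polynomial.lie_C_C_mul_X_pow {A : Type*} [Ring A] (a b : A) (r : ℕ) :
    ⁅C a, C b * X ^ r⁆ = C ⁅a, b⁆ * X ^ r := by
  simp only [Ring.lie_def, C_sub, C_mul, sub_mul, mul_assoc, X_pow_mul]

open Polynomial in
noncomputable def ιCMulXPow (R L : Type*) [CommRing R] [LieRing L] [LieAlgebra R L] (r : ℕ) :
    L →ₗ[R] (UniversalEnvelopingAlgebra R L)[X] :=
  LinearMap.mulRight R (X ^ r) ∘ₗ CAlgHom.toLinearMap ∘ₗ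
    (UniversalEnvelopingAlgebra.ι R).toLinearMap

theorem lie_C_ι_ιCMulXPow {R L : Type*} [CommRing R] [LieRing L] [LieAlgebra R L] (r : ℕ)
    (x z : L) :
    ⁅Polynomial.C (UniversalEnvelopingAlgebra.ι R x), ιCMulXPow R L r z⁆ =
      ιCMulXPow R L r ⁅x, z⁆ := by
  simp [ιCMulXPow, Polynomial.lie_C_C_mul_X_pow]

section DualBases

variable {d : ℕ} {g : Type} [LieRing g] [LieAlgebra ℂ g] {B : g →ₗ[ℂ] g →ₗ[ℂ] ℂ}
  {Jup Jlo : Module.Basis (Fin d) ℂ g}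

theorem apply_Jlo_eq_repr (hdual : ∀ a b, B (Jlo a) (Jup b) = if a = b then 1 else 0)
    (a : Fin d) (y : g) : B (Jlo a) y = Jup.repr y a := by
  have : B (Jlo a) = (Finsupp.lapply a).comp Jup.repr.toLinearMap :=
    Jup.ext fun b => by simp [hdual, Finsupp.single_apply, eq_comm]
  exact LinearMap.congr_fun this y

theorem apply_Jup_eq_repr (hdual : ∀ a b, B (Jlo a) (Jup b) = if a = b then 1 else 0)
    (z : g) (b : Fin d) : B z (Jup b) = Jlo.repr z b := by
  have : B.flip (Jup b) = (Finsupp.lapply b).comp Jlo.repr.toLinearMap :=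
    Jlo.ext fun a => by simp [hdual, Finsupp.single_apply]
  exact LinearMap.congr_fun this z

variable {N : ℕ} (ρ : g →ₗ⁅ℂ⁆ Matrix (Fin N) (Fin N) ℂ)

theorem apply_fElem (hdual : ∀ a b, B (Jlo a) (Jup b) = if a = b then 1 else 0)
    (k l : Fin N) (y : g) : B (fElem ρ Jup Jlo k l) y = -ρ y k l := by
  have hy := congrArg (fun y => ρ y k l) (Jup.sum_repr y)
  simp only [map_sum, map_smul, Matrix.sum_apply, Matrix.smul_apply, smul_eq_mul] at hy
  simp [fElem, apply_Jlo_eq_repr hdual, ← hy, mul_comm]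

theorem adActsAsCommutator_fElem (hBinv : ∀ x y z, B ⁅x, y⁆ z = B x ⁅y, z⁆)
    (hdual : ∀ a b, B (Jlo a) (Jup b) = if a = b then 1 else 0) (x : g) :
    AdActsAsCommutator x (Matrix.of (fElem ρ Jup Jlo)) (ρ x) := by
  intro k l
  refine Jlo.ext_elem fun b => ?_
  rw [← apply_Jup_eq_repr hdual, ← apply_Jup_eq_repr hdual, Matrix.of_apply, ← lie_skew, map_neg,
    LinearMap.neg_apply, hBinv, apply_fElem ρ hdual, LieHom.map_lie, Ring.lie_def]
  simp [apply_fElem ρ hdual, Matrix.mul_apply, mul_comm]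
  abel

end DualBases

section LoopTakiff

variable {g : Type} [LieRing g] [LieAlgebra ℂ g]

/-- `X ↦ X ⊗ vʳ ⊗ tᵖ`, so that `F^{(r)}_{ij}[p]` is the image of `f_{ij}`. -/
noncomputable def takiffLoopMode (ℓ r : ℕ) (p : ℤ) : g →ₗ[ℂ] LoopTakiff ℓ g :=
  (TensorProduct.mk ℂ _ _ (LaurentPolynomial.T p)).comp (TensorProduct.mk ℂ _ _ (vpow ℓ r))

theorem lie_takiffLoopMode_zero (ℓ r : ℕ) (p : ℤ) (x z : g) :
    ⁅takiffLoopMode ℓ 0 0 x, takiffLoopMode ℓ r p z⁆ = takiffLoopMode ℓ r p ⁅x, z⁆ := by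
  simp only [takiffLoopMode, LinearMap.comp_apply, TensorProduct.mk_apply]
  -- the bracket of `instLieRingLoopTakiff` is the base-change bracket only up to unfolding
  erw [LieAlgebra.ExtendScalars.bracket_tmul, LieAlgebra.ExtendScalars.bracket_tmul]
  simp [vpow]

variable {d N : ℕ} (ρ : g →ₗ⁅ℂ⁆ Matrix (Fin N) (Fin N) ℂ) (Jup Jlo : Module.Basis (Fin d) ℂ g)

theorem of_loopF_eq_map (ℓ r : ℕ) (p : ℤ) :
    Matrix.of (loopF ρ Jup Jlo ℓ r p) = (Matrix.of (fElem ρ Jup Jlo)).map (takiffLoopMode ℓ r p) :=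
  rfl

theorem loopFMat_eq_sum (ℓ : ℕ) :
    loopFMat ρ Jup Jlo ℓ =
      ∑ r : Fin (ℓ + 1), (Matrix.of (loopF ρ Jup Jlo ℓ r (-1))).map (ιCMulXPow ℂ _ r) := by
  ext k l
  simp [loopFMat, ιCMulXPow, Matrix.sum_apply]

theorem adActsAsCommutator_loopFMat {B : g →ₗ[ℂ] g →ₗ[ℂ] ℂ}
    (hBinv : ∀ x y z, B ⁅x, y⁆ z = B x ⁅y, z⁆)
    (hdual : ∀ a b, B (Jlo a) (Jup b) = if a = b then 1 else 0) (ℓ : ℕ) (i j : Fin N) :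
    AdActsAsCommutator (Polynomial.C (UniversalEnvelopingAlgebra.ι ℂ (loopF ρ Jup Jlo ℓ 0 0 i j)))
      (loopFMat ρ Jup Jlo ℓ) (ρ (fElem ρ Jup Jlo i j)) := by
  rw [loopFMat_eq_sum]
  refine AdActsAsCommutator.sum fun r => ?_
  rw [of_loopF_eq_map]
  exact ((adActsAsCommutator_fElem ρ hBinv hdual _).map _ (lie_takiffLoopMode_zero ℓ r (-1) _)).map
    _ (lie_C_ι_ιCMulXPow r _)

end LoopTakiff

theorem loop_takiff_commutator_degree_zero_general
    {d N : ℕ} {g : Type} [LieRing g] [LieAlgebra ℂ g]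
    (B : g →ₗ[ℂ] g →ₗ[ℂ] ℂ)
    (hBinv : ∀ x y z, B ⁅x, y⁆ z = B x ⁅y, z⁆)
    (Jup Jlo : Module.Basis (Fin d) ℂ g)
    (hdual : ∀ a b, B (Jlo a) (Jup b) = if a = b then 1 else 0)
    (ρ : g →ₗ⁅ℂ⁆ Matrix (Fin N) (Fin N) ℂ)
    (ℓ : ℕ)
    (i j : Fin N) (m : ℕ) :
    ⁅(Polynomial.C (UniversalEnvelopingAlgebra.ι ℂ (loopF ρ Jup Jlo ℓ 0 0 i j)) :
        Polynomial (UniversalEnvelopingAlgebra ℂ (LoopTakiff ℓ g))),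
      (((loopFMat ρ Jup Jlo ℓ) ^ m).trace)⁆ = 0 := by
  rw [Ring.lie_def, sub_eq_zero]
  exact ((adActsAsCommutator_loopFMat ρ Jup Jlo hBinv hdual ℓ i j).commute_trace_pow m).eq

/-- for `m ≥ 1` the commutator `[ι(F^{(0)}_{ij} ⊗ t⁰), tr 𝓕(u)ᵐ]` vanishes
in `U(L)[u]`, where `L` is the loop algebra of the Takiff algebra `𝔤_ℓ`. -/
theorem loop_takiff_commutator_degree_zero
    {d N : ℕ} {g : Type} [LieRing g] [LieAlgebra ℂ g]
    [FiniteDimensional ℂ g] [LieAlgebra.IsSimple ℂ g]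
    (B : g →ₗ[ℂ] g →ₗ[ℂ] ℂ)
    (hBsymm : ∀ x y, B x y = B y x)
    (hBinv : ∀ x y z, B ⁅x, y⁆ z = B x ⁅y, z⁆)
    (hBnondeg : ∀ x, (∀ y, B x y = 0) → x = 0)
    (Jup Jlo : Module.Basis (Fin d) ℂ g)
    (hdual : ∀ a b, B (Jlo a) (Jup b) = if a = b then 1 else 0)
    (ρ : g →ₗ⁅ℂ⁆ Matrix (Fin N) (Fin N) ℂ)
    (hρ : Function.Injective ρ)
    (ℓ : ℕ) (hℓ : 1 ≤ ℓ)
    (i j : Fin N) (m : ℕ) (hm : 1 ≤ m) :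
    ⁅(Polynomial.C (UniversalEnvelopingAlgebra.ι ℂ (loopF ρ Jup Jlo ℓ 0 0 i j)) :
        Polynomial (UniversalEnvelopingAlgebra ℂ (LoopTakiff ℓ g))),
      (((loopFMat ρ Jup Jlo ℓ) ^ m).trace)⁆ = 0 :=
  loop_takiff_commutator_degree_zero_general B hBinv Jup Jlo hdual ρ ℓ i j m
end
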